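/- Suppose that for every n, every hermitian or skew-hermitian matrix A ∈ M_n(F[t]) is congruent to a block-diagonal matrix whose diagonal blocks are 1×1 matrices and 2×2 matrices with zero diagonal. Then the norm map of F[t] is surjective onto F[t²]: for every a ∈ F[t²] there exists z ∈ F[t] with a = z z*. -/

import Mathlib

open Polynomial

/-- The involution of `F[t]` fixing `F` and sending `t ↦ -t`. -/
noncomputable def pstar {F : Type*} [Field F] (p : F[X]) : F[X] := p.comp (-X)

/-- The induced involution on matrices: transpose composed with entrywise `pstar`. -/
noncomputable def mstar {F : Type*} [Field F] {n : ℕ}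
    (A : Matrix (Fin n) (Fin n) F[X]) : Matrix (Fin n) (Fin n) F[X] :=
  Matrix.of fun i j => pstar (A j i)

/-- `A` and `B` are congruent if `B = S* A S` for some `S ∈ GL_n(F[t])`. -/
def PolyCongruent {F : Type*} [Field F] {n : ℕ}
    (A B : Matrix (Fin n) (Fin n) F[X]) : Prop :=
  ∃ S : Matrix (Fin n) (Fin n) F[X], IsUnit S.det ∧ B = mstar S * A * S

/-- `B` is block diagonal with diagonal blocks that are `1×1` matrices and
`2×2` matrices with zero diagonal: there is an involution `σ` of the indices
pairing each index either with itself (a `1×1` block) or with an adjacent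
index (a `2×2` block), all entries outside the blocks vanish, and the
diagonal entries of the `2×2` blocks vanish. -/
def IsBlkDiag12 {F : Type*} [Field F] {n : ℕ}
    (B : Matrix (Fin n) (Fin n) F[X]) : Prop :=
  ∃ σ : Equiv.Perm (Fin n),
    (∀ i, σ (σ i) = i) ∧
    (∀ i, σ i = i ∨ (σ i : ℕ) = (i : ℕ) + 1 ∨ (i : ℕ) = (σ i : ℕ) + 1) ∧
    (∀ i j, j ≠ i → j ≠ σ i → B i j = 0) ∧
    (∀ i, σ i ≠ i → B i i = 0)

/-! The skew-hermitian matrix `!![t w, 1; -1, t]` has determinant `1 + t² w`, a unit at `t = 0`.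
A congruent block-diagonal form cannot be diagonal, since skew-hermitian `1×1` blocks vanish at
`t = 0`; so it is a single `2×2` block with zero diagonal, whose determinant is a norm `b b*`.
Hence every `1 + t² w` with `w ∈ F[t²]` is a norm. Comparing leading coefficients in
`1 - δ t² = z z*` shows that every `δ ∈ F` is a square; in particular `t² = (i t)(i t)*` with
`i² = -1`. Since norms are multiplicative and every `a ∈ F[t²]` is either `t²` times an element
of smaller degree or a nonzero constant times some `1 + t² w`, every such `a` is a norm. -/

section

variable {F : Type*} [Field F]

@[simp] lemma pstar_C (a : F) : pstar (C a) = C a := C_comp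

@[simp] lemma pstar_X : pstar (X : F[X]) = -X := X_comp

@[simp] lemma pstar_one : pstar (1 : F[X]) = 1 := one_comp

@[simp] lemma pstar_add (p q : F[X]) : pstar (p + q) = pstar p + pstar q := add_comp

@[simp] lemma pstar_neg (p : F[X]) : pstar (-p) = -pstar p := neg_comp

@[simp] lemma pstar_mul (p q : F[X]) : pstar (p * q) = pstar p * pstar q := mul_comp p q _

@[simp] lemma pstar_pow (p : F[X]) (k : ℕ) : pstar (p ^ k) = pstar p ^ k := pow_comp p _ k

@[simp] lemma pstar_pstar (p : F[X]) : pstar (pstar p) = p := comp_neg_X_comp_neg_X p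

lemma pstar_eq_compRingHom (p : F[X]) : pstar p = compRingHom (-X) p := rfl

lemma natDegree_pstar (p : F[X]) : (pstar p).natDegree = p.natDegree := by
  simp [pstar, natDegree_comp]

lemma leadingCoeff_pstar (p : F[X]) :
    (pstar p).leadingCoeff = (-1) ^ p.natDegree * p.leadingCoeff :=
  comp_neg_X_leadingCoeff_eq p

lemma coeff_pstar (p : F[X]) (k : ℕ) : (pstar p).coeff k = (-1) ^ k * p.coeff k := by
  induction p using Polynomial.induction_on' with
  | add p q hp hq => simp [hp, hq, mul_add]
  | monomial n a =>
    rw [← C_mul_X_pow_eq_monomial, pstar_mul, pstar_C, pstar_pow, pstar_X, neg_pow,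
      ← mul_assoc, ← C_1, ← C_neg, ← C_pow, ← C_mul, coeff_C_mul_X_pow, coeff_C_mul_X_pow]
    split_ifs with h
    · rw [h, mul_comm]
    · rw [mul_zero]

lemma coeff_one_eq_zero_of_pstar_eq (h2 : (2 : F) ≠ 0) {p : F[X]} (hp : pstar p = p) :
    p.coeff 1 = 0 := by
  have h := coeff_pstar p 1
  rw [hp, pow_one] at h
  exact (mul_eq_zero.mp (by linear_combination h : (2 : F) * p.coeff 1 = 0)).resolve_left h2

lemma eval_zero_eq_zero_of_pstar_eq_neg (h2 : (2 : F) ≠ 0) {p : F[X]} (hp : pstar p = -p) :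
    p.eval 0 = 0 := by
  have h := coeff_pstar p 0
  rw [hp, pow_zero, one_mul, coeff_neg] at h
  rw [← coeff_zero_eq_eval_zero]
  exact (mul_eq_zero.mp (by linear_combination -h : (2 : F) * p.coeff 0 = 0)).resolve_left h2

lemma exists_eq_C_add_X_sq_mul (h2 : (2 : F) ≠ 0) {a : F[X]} (ha : pstar a = a) :
    ∃ w, pstar w = w ∧ a = C (a.coeff 0) + X ^ 2 * w := by
  have hdvd : X ^ 2 ∣ a - C (a.coeff 0) := by
    rw [X_pow_dvd_iff]
    intro d hd
    interval_cases d
    · simp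
    · simp [coeff_one_eq_zero_of_pstar_eq h2 ha]
  obtain ⟨w, hw⟩ := hdvd
  refine ⟨w, ?_, by linear_combination hw⟩
  have h := congrArg pstar hw
  simp only [pstar_add, pstar_neg, sub_eq_add_neg, pstar_mul, pstar_pow, pstar_X, pstar_C, ha,
    neg_sq] at h
  rw [← sub_eq_add_neg, hw] at h
  exact (mul_left_cancel₀ (pow_ne_zero 2 X_ne_zero) h).symm

section MStar

variable {n : ℕ}

lemma mstar_eq_transpose_map (M : Matrix (Fin n) (Fin n) F[X]) :
    mstar M = (M.map (compRingHom (-X))).transpose :=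
  rfl

lemma mstar_mul (M N : Matrix (Fin n) (Fin n) F[X]) : mstar (M * N) = mstar N * mstar M := by
  simp only [mstar_eq_transpose_map, Matrix.map_mul, Matrix.transpose_mul]

lemma mstar_mstar (M : Matrix (Fin n) (Fin n) F[X]) : mstar (mstar M) = M :=
  Matrix.ext fun i j => pstar_pstar (M i j)

lemma det_mstar (M : Matrix (Fin n) (Fin n) F[X]) : (mstar M).det = pstar M.det := by
  rw [mstar_eq_transpose_map, Matrix.det_transpose, pstar_eq_compRingHom, RingHom.map_det,
    RingHom.mapMatrix_apply]

lemma pstar_apply_of_mstar_eq_neg {M : Matrix (Fin n) (Fin n) F[X]} (hM : mstar M = -M)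
    (i j : Fin n) : pstar (M i j) = -M j i :=
  congrFun (congrFun hM j) i

lemma PolyCongruent.mstar_eq_neg {A B : Matrix (Fin n) (Fin n) F[X]} (hAB : PolyCongruent A B)
    (hA : mstar A = -A) : mstar B = -B := by
  obtain ⟨S, -, rfl⟩ := hAB
  rw [mstar_mul, mstar_mul, mstar_mstar, hA]
  simp only [Matrix.neg_mul, Matrix.mul_neg, Matrix.mul_assoc]

lemma PolyCongruent.exists_det_eq {A B : Matrix (Fin n) (Fin n) F[X]} (hAB : PolyCongruent A B) :
    ∃ c : F, c ≠ 0 ∧ B.det = C (c ^ 2) * A.det := by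
  obtain ⟨S, hS, rfl⟩ := hAB
  obtain ⟨c, hc, hSc⟩ := Polynomial.isUnit_iff.mp hS
  refine ⟨c, hc.ne_zero, ?_⟩
  rw [Matrix.det_mul, Matrix.det_mul, det_mstar, ← hSc, pstar_C, C_pow]
  ring

end MStar

lemma IsBlkDiag12.fin_two {B : Matrix (Fin 2) (Fin 2) F[X]} (hB : IsBlkDiag12 B) :
    (B 0 1 = 0 ∧ B 1 0 = 0) ∨ (B 0 0 = 0 ∧ B 1 1 = 0) := by
  obtain ⟨σ, -, -, hoff, hdiag⟩ := hB
  rcases Fin.exists_fin_two.mp ⟨σ 0, rfl⟩ with h0 | h0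
  · have h1 : σ 1 = 1 := by
      rcases Fin.exists_fin_two.mp ⟨σ 1, rfl⟩ with h1 | h1
      · exact absurd (σ.injective (h1.trans h0.symm)) (by decide)
      · exact h1
    exact .inl ⟨hoff 0 1 (by decide) (by rw [h0]; decide),
      hoff 1 0 (by decide) (by rw [h1]; decide)⟩
  · have h1 : σ 1 = 0 := by
      rcases Fin.exists_fin_two.mp ⟨σ 1, rfl⟩ with h1 | h1
      · exact h1
      · exact absurd (σ.injective (h1.trans h0.symm)) (by decide)
    exact .inr ⟨hdiag 0 (by rw [h0]; decide), hdiag 1 (by rw [h1]; decide)⟩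

def IsNorm (a : F[X]) : Prop := ∃ z, a = z * pstar z

lemma IsNorm.mul {a b : F[X]} (ha : IsNorm a) (hb : IsNorm b) : IsNorm (a * b) := by
  obtain ⟨z, rfl⟩ := ha
  obtain ⟨y, rfl⟩ := hb
  exact ⟨z * y, by rw [pstar_mul]; ring⟩

lemma isNorm_C_of_isSquare {δ : F} (hδ : IsSquare δ) : IsNorm (C δ) := by
  obtain ⟨c, rfl⟩ := hδ
  exact ⟨C c, by rw [pstar_C, C_mul]⟩

lemma isNorm_X_sq (hi : IsSquare (-1 : F)) : IsNorm (X ^ 2 : F[X]) := by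
  obtain ⟨i, hi⟩ := hi
  have hCi : C i * C i = (-1 : F[X]) := by rw [← C_mul, ← hi, C_neg, C_1]
  refine ⟨C i * X, ?_⟩
  rw [pstar_mul, pstar_C, pstar_X]
  linear_combination (X ^ 2 : F[X]) * hCi

lemma isSquare_neg_of_isNorm_one_add_X_sq_mul_C {δ : F} (h : IsNorm (1 + X ^ 2 * C δ)) :
    IsSquare (-δ) := by
  rcases eq_or_ne δ 0 with rfl | hδ
  · exact ⟨0, by simp⟩
  obtain ⟨z, hz⟩ := h
  have hquad : 1 + X ^ 2 * C δ = C δ * X ^ 2 + C 0 * X + C 1 := by simp only [C_0, C_1]; ring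
  have hz0 : z ≠ 0 := by rintro rfl; simpa using congrArg (eval 0) hz
  have hdeg : z.natDegree = 1 := by
    have h := congrArg natDegree hz
    rw [hquad, natDegree_quadratic hδ, natDegree_mul hz0 (by simpa [pstar] using hz0),
      natDegree_pstar] at h
    omega
  have h := congrArg leadingCoeff hz
  rw [hquad, leadingCoeff_quadratic hδ, leadingCoeff_mul, leadingCoeff_pstar, hdeg] at h
  exact ⟨z.leadingCoeff, by linear_combination -h⟩

lemma isNorm_det_of_congruent_blkDiag (h2 : (2 : F) ≠ 0) {A B : Matrix (Fin 2) (Fin 2) F[X]}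
    (hA : mstar A = -A) (hAB : PolyCongruent A B) (hB : IsBlkDiag12 B) (hA0 : A.det.eval 0 ≠ 0) :
    IsNorm A.det := by
  obtain ⟨c, hc, hdet⟩ := hAB.exists_det_eq
  have hBskew := pstar_apply_of_mstar_eq_neg (hAB.mstar_eq_neg hA)
  rcases hB.fin_two with ⟨h01, h10⟩ | ⟨h00, h11⟩
  · refine absurd ?_ hA0
    have hB0 : B.det.eval 0 = 0 := by
      rw [Matrix.det_fin_two, h01, h10, eval_sub, eval_mul,
        eval_zero_eq_zero_of_pstar_eq_neg h2 (hBskew 0 0)]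
      simp
    rw [hdet, eval_mul, eval_C] at hB0
    exact (mul_eq_zero.mp hB0).resolve_left (pow_ne_zero 2 hc)
  · have hBnorm : B.det = B 0 1 * pstar (B 0 1) := by
      rw [Matrix.det_fin_two, h00, h11, hBskew 0 1]
      ring
    have hAB' : A.det = C ((c⁻¹) ^ 2) * B.det := by
      rw [hdet, ← mul_assoc, ← C_mul, ← mul_pow, inv_mul_cancel₀ hc, one_pow, C_1, one_mul]
    rw [hAB', hBnorm]
    exact (isNorm_C_of_isSquare (.sq _)).mul ⟨B 0 1, rfl⟩

lemma isNorm_one_add_X_sq_mul (h2 : (2 : F) ≠ 0)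
    (hK : ∀ A : Matrix (Fin 2) (Fin 2) F[X], mstar A = -A →
      ∃ B : Matrix (Fin 2) (Fin 2) F[X], PolyCongruent A B ∧ IsBlkDiag12 B)
    {w : F[X]} (hw : pstar w = w) : IsNorm (1 + X ^ 2 * w) := by
  let A : Matrix (Fin 2) (Fin 2) F[X] := !![X * w, 1; -1, X]
  have hA : mstar A = -A := by
    ext i j
    fin_cases i <;> fin_cases j <;> simp [A, mstar, hw]
  have hdet : A.det = 1 + X ^ 2 * w := by
    rw [Matrix.det_fin_two_of]
    ring
  obtain ⟨B, hAB, hB⟩ := hK A hA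
  rw [← hdet]
  exact isNorm_det_of_congruent_blkDiag h2 hA hAB hB (by simp [hdet])

lemma isNorm_of_pstar_eq (h2 : (2 : F) ≠ 0)
    (hnorm : ∀ w : F[X], pstar w = w → IsNorm (1 + X ^ 2 * w)) {a : F[X]} (ha : pstar a = a) :
    IsNorm a := by
  have hsq (δ : F) : IsSquare δ := by
    simpa using isSquare_neg_of_isNorm_one_add_X_sq_mul_C (hnorm (C (-δ)) (pstar_C _))
  induction hn : a.natDegree using Nat.strong_induction_on generalizing a with
  | _ n ih =>
  obtain ⟨w, hw, hwa⟩ := exists_eq_C_add_X_sq_mul h2 ha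
  by_cases ha0 : a.coeff 0 = 0
  · rw [ha0, C_0, zero_add] at hwa
    rcases eq_or_ne w 0 with rfl | hw0
    · exact ⟨0, by simpa using hwa⟩
    have hdeg : w.natDegree < n := by
      rw [← hn, hwa, natDegree_mul (pow_ne_zero 2 X_ne_zero) hw0, natDegree_X_pow]
      omega
    rw [hwa]
    exact (isNorm_X_sq (hsq (-1))).mul (ih _ hdeg hw rfl)
  · have hinv : C (a.coeff 0) * C (a.coeff 0)⁻¹ = 1 := by rw [← C_mul, mul_inv_cancel₀ ha0, C_1]
    have hscale : a = C (a.coeff 0) * (1 + X ^ 2 * (C (a.coeff 0)⁻¹ * w)) := by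
      linear_combination hwa - X ^ 2 * w * hinv
    rw [hscale]
    exact (isNorm_C_of_isSquare (hsq _)).mul (hnorm _ (by rw [pstar_mul, pstar_C, hw]))

end

/-- If (for every `n`) every hermitian or skew-hermitian matrix over `F[t]`
(`char F ≠ 2`) is congruent to a direct sum of `1×1` matrices and `2×2`
matrices with zero diagonal, then the norm map `x ↦ x x*` of `F[t]` is onto
the fixed ring `F[t²]`. -/
theorem kac_implies_norm_surjective {F : Type*} [Field F] (h2 : (2 : F) ≠ 0)
    (hK : ∀ (n : ℕ) (A : Matrix (Fin n) (Fin n) F[X]),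
      (mstar A = A ∨ mstar A = -A) →
      ∃ B : Matrix (Fin n) (Fin n) F[X], PolyCongruent A B ∧ IsBlkDiag12 B) :
    ∀ a : F[X], pstar a = a → ∃ z : F[X], a = z * pstar z := by
  intro a ha
  exact isNorm_of_pstar_eq h2
    (fun w hw => isNorm_one_add_X_sq_mul h2 (fun A hA => hK 2 A (Or.inr hA)) hw) ha
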